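/- arXiv:2206.09976 — 5 statements merged into one kernel-verified Lean document; each statement's English description precedes it below -/
import Mathlib

section
/- If Σ(θ) is a differentiable matrix-valued function of a real parameter θ with Σ(θ) symmetric positive definite, and M(θ) := Σ(θ)⁻¹ - Σ(θ)⁻¹X(XᵀΣ(θ)⁻¹X)⁻¹XᵀΣ(θ)⁻¹, then the derivative of M with respect to θ satisfies M'(θ) = -M(θ)·Σ'(θ)·M(θ). -/
/-!
Write `A = Σ⁻¹`, `C = (XᵀAX)⁻¹` and `K = AXCXᵀA`, so that `M = A - K`. Differentiating inverses
gives `A' = -AΣ'A` and `C' = -C(XᵀA'X)C = CXᵀAΣ'AXC`, and the product rule then yields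
`K' = -AΣ'K + KΣ'K - KΣ'A`. Hence `M' = A' - K' = -(A - K)Σ'(A - K) = -MΣ'M`.
-/

open Matrix

/-- The matrix `M(Σ) = Σ⁻¹ - Σ⁻¹X(XᵀΣ⁻¹X)⁻¹XᵀΣ⁻¹`. -/
noncomputable def Mmat {n m : ℕ} (X : Matrix (Fin n) (Fin m) ℝ)
    (S : Matrix (Fin n) (Fin n) ℝ) : Matrix (Fin n) (Fin n) ℝ :=
  S⁻¹ - S⁻¹ * X * (Xᵀ * S⁻¹ * X)⁻¹ * Xᵀ * S⁻¹

section MatrixCalculus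

variable {𝕜 : Type*} [RCLike 𝕜] {x : 𝕜}

theorem hasDerivAt_matrix_iff {m n : Type*} [Fintype n] {f : 𝕜 → Matrix m n 𝕜}
    {f' : Matrix m n 𝕜} :
    HasDerivAt f f' x ↔ ∀ i j, HasDerivAt (fun t => f t i j) (f' i j) x :=
  hasDerivAt_pi.trans (forall_congr' fun _ => hasDerivAt_pi)

theorem HasDerivAt.matrix_mul {l m n : Type*} [Fintype m] [Fintype n]
    {A : 𝕜 → Matrix l m 𝕜} {A' : Matrix l m 𝕜} {B : 𝕜 → Matrix m n 𝕜} {B' : Matrix m n 𝕜}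
    (hA : HasDerivAt A A' x) (hB : HasDerivAt B B' x) :
    HasDerivAt (fun t => A t * B t) (A' * B x + A x * B') x := by
  rw [hasDerivAt_matrix_iff] at *
  intro i j
  simpa only [mul_apply, Matrix.add_apply, ← Finset.sum_add_distrib] using
    HasDerivAt.fun_sum fun k _ => (hA i k).fun_mul (hB k j)

-- `A⁻¹ = Ring.inverse A` holds for every matrix, so invertibility is needed at `x` only.
attribute [local instance] Matrix.linftyOpNormedRing Matrix.linftyOpNormedAlgebra in
theorem HasDerivAt.matrix_inv {n : Type*} [Fintype n] [DecidableEq n]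
    {A : 𝕜 → Matrix n n 𝕜} {A' : Matrix n n 𝕜} (hA : HasDerivAt A A' x) (hAx : IsUnit (A x)) :
    HasDerivAt (fun t => (A t)⁻¹) (-((A x)⁻¹ * A' * (A x)⁻¹)) x := by
  obtain ⟨u, hu⟩ := hAx
  simp only [nonsing_inv_eq_ringInverse, ← hu]
  have h := (hasFDerivAt_ringInverse (𝕜 := 𝕜) u).comp_hasDerivAt_of_eq x hA hu
  simp only [_root_.neg_apply, ContinuousLinearMap.mulLeftRight_apply, ← Ring.inverse_unit] at h
  exact h

end MatrixCalculus

attribute [local instance] Matrix.normedAddCommGroup Matrix.normedSpace in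
theorem hasDerivAt_Mmat {n m : ℕ} (X : Matrix (Fin n) (Fin m) ℝ)
    {S : ℝ → Matrix (Fin n) (Fin n) ℝ} {S' : Matrix (Fin n) (Fin n) ℝ} {θ : ℝ}
    (hS : HasDerivAt S S' θ) (hSθ : IsUnit (S θ)) (hgram : IsUnit (Xᵀ * (S θ)⁻¹ * X)) :
    HasDerivAt (fun t => Mmat X (S t)) (-(Mmat X (S θ) * S' * Mmat X (S θ))) θ := by
  have hX := hasDerivAt_const θ X
  have hXt := hasDerivAt_const θ Xᵀ
  have hA := hS.matrix_inv hSθ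
  have hC := ((hXt.matrix_mul hA).matrix_mul hX).matrix_inv hgram
  have hK := (((hA.matrix_mul hX).matrix_mul hC).matrix_mul hXt).matrix_mul hA
  refine (hA.sub hK).congr_deriv ?_
  simp only [Mmat, Matrix.mul_zero, Matrix.zero_mul, add_zero, zero_add, Matrix.mul_sub,
    Matrix.sub_mul, Matrix.add_mul, Matrix.mul_neg, Matrix.neg_mul, Matrix.mul_assoc, neg_neg]
  abel

theorem deriv_M_general {n m : ℕ} (X : Matrix (Fin n) (Fin m) ℝ)
    (s : Set ℝ)
    (S : ℝ → Matrix (Fin n) (Fin n) ℝ) (S' : Matrix (Fin n) (Fin n) ℝ) (θ₀ : ℝ)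
    (hθ₀ : θ₀ ∈ s)
    (hpos : ∀ θ ∈ s, (S θ).PosDef)
    (hinv : ∀ θ ∈ s, IsUnit (Xᵀ * (S θ)⁻¹ * X).det)
    (hS : ∀ i j, HasDerivAt (fun θ => S θ i j) (S' i j) θ₀) :
    ∀ i j, HasDerivAt (fun θ => Mmat X (S θ) i j)
      ((-(Mmat X (S θ₀) * S' * Mmat X (S θ₀))) i j) θ₀ :=
  hasDerivAt_matrix_iff.1 <|
    hasDerivAt_Mmat X (hasDerivAt_matrix_iff.2 hS) (hpos θ₀ hθ₀).isUnit
      ((isUnit_iff_isUnit_det _).2 (hinv θ₀ hθ₀))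

theorem deriv_M {n m : ℕ} (X : Matrix (Fin n) (Fin m) ℝ) (hX : X.rank = m)
    (s : Set ℝ) (hs : IsOpen s)
    (S : ℝ → Matrix (Fin n) (Fin n) ℝ) (S' : Matrix (Fin n) (Fin n) ℝ) (θ₀ : ℝ)
    (hθ₀ : θ₀ ∈ s)
    (hpos : ∀ θ ∈ s, (S θ).PosDef)
    (hinv : ∀ θ ∈ s, IsUnit (Xᵀ * (S θ)⁻¹ * X).det)
    (hS : ∀ i j, HasDerivAt (fun θ => S θ i j) (S' i j) θ₀) :
    ∀ i j, HasDerivAt (fun θ => Mmat X (S θ) i j)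
      ((-(Mmat X (S θ₀) * S' * Mmat X (S θ₀))) i j) θ₀ :=
  deriv_M_general X s S S' θ₀ hθ₀ hpos hinv hS
end

section
/- If the nonzero eigenvalues ψ_{m+1}, ..., ψ_n of M₁ are not all equal, then the matrix G := (trace(M₁)/(n-m))·M₁ - M₁² is sign-indefinite, i.e., it has both a strictly positive and a strictly negative eigenvalue; if the nonzero eigenvalues are all equal, then G = 0. -/
/-
`M₁ K M₁ = M₁` makes `M₁` positive semidefinite, and its kernel is the column space of `X`, so
`rank M₁ = n - m` and `trace M₁ / (n - m)` is the mean `c` of the nonzero eigenvalues `ψ`.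
`G = c M₁ - M₁²` acts on the eigenvectors of `M₁` by `ψ (c - ψ)`: this is positive at the
smallest and negative at the largest nonzero `ψ` when these differ, and vanishes identically
when all nonzero `ψ` equal `c`.
-/

open Matrix Finset
open scoped BigOperators

namespace Finset

variable {ι α : Type*} [Field α] [LinearOrder α] [IsStrictOrderedRing α] {s : Finset ι} {f : ι → α}

theorem exists_lt_expect_of_ne (h : ∃ i ∈ s, ∃ j ∈ s, f i ≠ f j) :
    ∃ a ∈ s, f a < 𝔼 i ∈ s, f i := by
  obtain ⟨i, hi, j, hj, hij⟩ := h
  obtain ⟨a, ha, hmin⟩ := s.exists_min_image f ⟨i, hi⟩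
  refine ⟨a, ha, lt_expect hmin ?_⟩
  by_cases hia : f i = f a
  · exact ⟨j, hj, (hmin j hj).lt_of_ne (hia ▸ hij)⟩
  · exact ⟨i, hi, (hmin i hi).lt_of_ne' hia⟩

theorem exists_expect_lt_of_ne (h : ∃ i ∈ s, ∃ j ∈ s, f i ≠ f j) :
    ∃ b ∈ s, 𝔼 i ∈ s, f i < f b := by
  obtain ⟨b, hb, hlt⟩ := exists_lt_expect_of_ne (f := fun i => -f i) (by simpa using h)
  exact ⟨b, hb, by simpa [expect_neg_distrib] using hlt⟩

end Finset

namespace Matrix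

section Hermitian

variable {𝕜 n : Type*} [RCLike 𝕜] [Fintype n] [DecidableEq n] {A : Matrix n n 𝕜}

theorem IsHermitian.exists_eigenvalues_eq_of_mulVec_eq_smul (hA : A.IsHermitian) {v : n → 𝕜}
    (hv : v ≠ 0) {μ : ℝ} (h : A *ᵥ v = (μ : 𝕜) • v) : ∃ i, hA.eigenvalues i = μ := by
  rw [← Set.mem_range, ← hA.spectrum_real_eq_range_eigenvalues, ← spectrum.algebraMap_mem_iff 𝕜,
    spectrum.mem_iff, isUnit_iff_isUnit_det, isUnit_iff_ne_zero, not_not,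
    ← exists_mulVec_eq_zero_iff]
  refine ⟨v, hv, ?_⟩
  rw [sub_mulVec, h, Algebra.algebraMap_eq_smul_one, smul_mulVec, one_mulVec]
  simp

theorem IsHermitian.eq_zero_of_mulVec_eigenvectorBasis (hA : A.IsHermitian) {B : Matrix n n 𝕜}
    (h : ∀ i, B *ᵥ ⇑(hA.eigenvectorBasis i) = 0) : B = 0 := by
  rw [← map_eq_zero_iff _ (toLpLin (R := 𝕜) (m := n) (n := n) 2 2).injective]
  refine hA.eigenvectorBasis.toBasis.ext fun i => ?_
  simp [toLpLin_apply, h]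

theorem IsHermitian.rank_eq_card_eigenvalues_ne_zero (hA : A.IsHermitian) :
    A.rank = #{i | hA.eigenvalues i ≠ 0} := by
  rw [hA.rank_eq_card_non_zero_eigs, Fintype.card_subtype]

end Hermitian

section Real

variable {n : Type*} [Fintype n] [DecidableEq n] {A : Matrix n n ℝ}

theorem IsHermitian.trace_div_rank_eq_expect (hA : A.IsHermitian) :
    A.trace / A.rank = 𝔼 i ∈ {i | hA.eigenvalues i ≠ 0}, hA.eigenvalues i := by
  rw [expect_eq_sum_div_card, sum_filter_ne_zero, hA.rank_eq_card_eigenvalues_ne_zero,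
    hA.trace_eq_sum_eigenvalues]
  rfl

theorem IsHermitian.smul_sub_sq_mulVec_eigenvectorBasis (hA : A.IsHermitian) (c : ℝ) (i : n) :
    (c • A - A ^ 2) *ᵥ ⇑(hA.eigenvectorBasis i) =
      (hA.eigenvalues i * (c - hA.eigenvalues i)) • ⇑(hA.eigenvectorBasis i) := by
  rw [sq, sub_mulVec, smul_mulVec, ← mulVec_mulVec, hA.mulVec_eigenvectorBasis,
    mulVec_smul, hA.mulVec_eigenvectorBasis, smul_smul, smul_smul, ← sub_smul, mul_sub,
    mul_comm c]

theorem IsHermitian.trace_div_rank_smul_sub_sq_eq_zero (hA : A.IsHermitian)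
    (h : ∀ i j, hA.eigenvalues i ≠ 0 → hA.eigenvalues j ≠ 0 →
      hA.eigenvalues i = hA.eigenvalues j) :
    (A.trace / A.rank) • A - A ^ 2 = 0 := by
  refine hA.eq_zero_of_mulVec_eigenvectorBasis fun i => ?_
  rw [hA.smul_sub_sq_mulVec_eigenvectorBasis]
  by_cases hi : hA.eigenvalues i = 0
  · simp [hi]
  · have hmean : A.trace / A.rank = hA.eigenvalues i := by
      rw [hA.trace_div_rank_eq_expect, expect_congr rfl fun j hj => h j i (mem_filter.1 hj).2 hi,
        expect_const ⟨i, by simpa using hi⟩]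
    simp [hmean]

theorem PosSemidef.trace_div_rank_smul_sub_sq_indefinite (hA : A.PosSemidef)
    {B : Matrix n n ℝ} (hB : B.IsHermitian) (hBA : B = (A.trace / A.rank) • A - A ^ 2)
    (h : ¬ ∀ i j, hA.isHermitian.eigenvalues i ≠ 0 → hA.isHermitian.eigenvalues j ≠ 0 →
      hA.isHermitian.eigenvalues i = hA.isHermitian.eigenvalues j) :
    (∃ i, 0 < hB.eigenvalues i) ∧ ∃ j, hB.eigenvalues j < 0 := by
  set ψ := hA.isHermitian.eigenvalues
  have hne : ∃ i ∈ ({i | ψ i ≠ 0} : Finset n), ∃ j ∈ ({i | ψ i ≠ 0} : Finset n), ψ i ≠ ψ j := by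
    simpa using h
  have hpos : ∀ i ∈ ({i | ψ i ≠ 0} : Finset n), 0 < ψ i :=
    fun i hi => (hA.eigenvalues_nonneg i).lt_of_ne' (mem_filter.1 hi).2
  have heig (i : n) : ∃ k, hB.eigenvalues k = ψ i * (A.trace / A.rank - ψ i) :=
    hB.exists_eigenvalues_eq_of_mulVec_eq_smul
      (by simpa using hA.isHermitian.eigenvectorBasis.orthonormal.ne_zero i)
      (hBA ▸ hA.isHermitian.smul_sub_sq_mulVec_eigenvectorBasis _ i)
  rw [hA.isHermitian.trace_div_rank_eq_expect] at heig
  constructor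
  · obtain ⟨a, ha, hlt⟩ := exists_lt_expect_of_ne hne
    obtain ⟨k, hk⟩ := heig a
    exact ⟨k, hk ▸ mul_pos (hpos a ha) (sub_pos.2 hlt)⟩
  · obtain ⟨b, hb, hlt⟩ := exists_expect_lt_of_ne hne
    obtain ⟨k, hk⟩ := heig b
    exact ⟨k, hk ▸ mul_neg_of_pos_of_neg (hpos b hb) (sub_neg.2 hlt)⟩

end Real

section GLS

variable {R n m : Type*} [Field R] [Fintype n] [Fintype m] [DecidableEq n] [DecidableEq m]

noncomputable def glsResidual (K : Matrix n n R) (X : Matrix n m R) : Matrix n n R :=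
  K⁻¹ - K⁻¹ * X * (Xᵀ * K⁻¹ * X)⁻¹ * Xᵀ * K⁻¹

variable {K : Matrix n n R} {X : Matrix n m R}

theorem glsResidual_mul (hS : IsUnit (Xᵀ * K⁻¹ * X).det) : glsResidual K X * X = 0 := by
  rw [glsResidual, Matrix.sub_mul]
  simp only [Matrix.mul_assoc]
  rw [nonsing_inv_mul _ (by rwa [← Matrix.mul_assoc]), Matrix.mul_one, sub_self]

theorem mul_glsResidual (hK : IsUnit K.det) :
    K * glsResidual K X = 1 - X * ((Xᵀ * K⁻¹ * X)⁻¹ * Xᵀ * K⁻¹) := by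
  rw [glsResidual, Matrix.mul_sub, mul_nonsing_inv K hK]
  simp only [← Matrix.mul_assoc]
  rw [mul_nonsing_inv K hK, Matrix.one_mul]

theorem glsResidual_mul_mul_self (hK : IsUnit K.det) (hS : IsUnit (Xᵀ * K⁻¹ * X).det) :
    glsResidual K X * K * glsResidual K X = glsResidual K X := by
  rw [Matrix.mul_assoc, mul_glsResidual hK, Matrix.mul_sub, Matrix.mul_one, ← Matrix.mul_assoc,
    glsResidual_mul hS, Matrix.zero_mul, sub_zero]

theorem ker_glsResidual (hK : IsUnit K.det) (hS : IsUnit (Xᵀ * K⁻¹ * X).det) :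
    LinearMap.ker (glsResidual K X).mulVecLin = LinearMap.range X.mulVecLin := by
  ext v
  simp only [LinearMap.mem_ker, LinearMap.mem_range, mulVecLin_apply]
  constructor
  · intro hv
    refine ⟨((Xᵀ * K⁻¹ * X)⁻¹ * Xᵀ * K⁻¹) *ᵥ v, ?_⟩
    have hKv : (K * glsResidual K X) *ᵥ v = 0 := by rw [← mulVec_mulVec, hv, mulVec_zero]
    rwa [mul_glsResidual hK, sub_mulVec, one_mulVec, sub_eq_zero, ← mulVec_mulVec, eq_comm] at hKv
  · rintro ⟨u, rfl⟩
    rw [mulVec_mulVec, glsResidual_mul hS, zero_mulVec]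

theorem rank_glsResidual_add_rank (hK : IsUnit K.det) (hS : IsUnit (Xᵀ * K⁻¹ * X).det) :
    (glsResidual K X).rank + X.rank = Fintype.card n := by
  have := LinearMap.finrank_range_add_finrank_ker (glsResidual K X).mulVecLin
  rwa [ker_glsResidual hK hS, Module.finrank_fintype_fun_eq_card] at this

theorem isHermitian_glsResidual {K : Matrix n n ℝ} {X : Matrix n m ℝ} (hK : K.IsHermitian) :
    (glsResidual K X).IsHermitian := by
  have hKt : Kᵀ = K := by simpa using hK.eq
  have hS : (Xᵀ * K⁻¹ * X).IsHermitian := by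
    simpa using isHermitian_conjTranspose_mul_mul X hK.inv
  have hP : (K⁻¹ * X * (Xᵀ * K⁻¹ * X)⁻¹ * Xᵀ * K⁻¹).IsHermitian := by
    simpa [Matrix.mul_assoc, transpose_nonsing_inv, hKt] using
      isHermitian_conjTranspose_mul_mul (Xᵀ * K⁻¹) hS.inv
  exact hK.inv.sub hP

theorem posSemidef_glsResidual {K : Matrix n n ℝ} {X : Matrix n m ℝ} (hK : K.PosDef)
    (hS : IsUnit (Xᵀ * K⁻¹ * X).det) : (glsResidual K X).PosSemidef := by
  have h := hK.posSemidef.conjTranspose_mul_mul_same (glsResidual K X)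
  rwa [(isHermitian_glsResidual hK.isHermitian).eq,
    glsResidual_mul_mul_self ((isUnit_iff_isUnit_det K).1 hK.isUnit) hS] at h

end GLS

end Matrix

theorem G_sign_indefinite_general {n m : ℕ}
    (K : Matrix (Fin n) (Fin n) ℝ) (hK : K.PosDef)
    (X : Matrix (Fin n) (Fin m) ℝ) (hX : X.rank = m)
    (hinv : IsUnit (Xᵀ * K⁻¹ * X).det)
    (M₁ G : Matrix (Fin n) (Fin n) ℝ)
    (hM₁ : M₁ = K⁻¹ - K⁻¹ * X * (Xᵀ * K⁻¹ * X)⁻¹ * Xᵀ * K⁻¹)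
    (hGdef : G = (M₁.trace / ((n : ℝ) - m)) • M₁ - M₁ ^ 2)
    (hH : M₁.IsHermitian) (hGH : G.IsHermitian) :
    (¬ (∀ i j, hH.eigenvalues i ≠ 0 → hH.eigenvalues j ≠ 0 →
          hH.eigenvalues i = hH.eigenvalues j) →
        (∃ i, 0 < hGH.eigenvalues i) ∧ (∃ j, hGH.eigenvalues j < 0)) ∧
    ((∀ i j, hH.eigenvalues i ≠ 0 → hH.eigenvalues j ≠ 0 →
          hH.eigenvalues i = hH.eigenvalues j) → G = 0) := by
  have hM : M₁ = glsResidual K X := hM₁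
  have hrank : (M₁.rank : ℝ) = n - m := by
    have h := rank_glsResidual_add_rank (X := X) ((isUnit_iff_isUnit_det K).1 hK.isUnit) hinv
    rw [← hM, hX, Fintype.card_fin] at h
    rw [eq_sub_iff_add_eq]
    exact_mod_cast h
  have hG : G = (M₁.trace / M₁.rank) • M₁ - M₁ ^ 2 := by rw [hGdef, hrank]
  have hPSD : M₁.PosSemidef := hM ▸ posSemidef_glsResidual hK hinv
  exact ⟨hPSD.trace_div_rank_smul_sub_sq_indefinite hGH hG,
    fun h => hG.trans (hH.trace_div_rank_smul_sub_sq_eq_zero h)⟩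

theorem G_sign_indefinite {n m : ℕ} (hmn : m < n)
    (K : Matrix (Fin n) (Fin n) ℝ) (hK : K.PosDef)
    (X : Matrix (Fin n) (Fin m) ℝ) (hX : X.rank = m)
    (hinv : IsUnit (Xᵀ * K⁻¹ * X).det)
    (M₁ G : Matrix (Fin n) (Fin n) ℝ)
    (hM₁ : M₁ = K⁻¹ - K⁻¹ * X * (Xᵀ * K⁻¹ * X)⁻¹ * Xᵀ * K⁻¹)
    (hGdef : G = (M₁.trace / ((n : ℝ) - m)) • M₁ - M₁ ^ 2)
    (hH : M₁.IsHermitian) (hGH : G.IsHermitian) :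
    (¬ (∀ i j, hH.eigenvalues i ≠ 0 → hH.eigenvalues j ≠ 0 →
          hH.eigenvalues i = hH.eigenvalues j) →
        (∃ i, 0 < hGH.eigenvalues i) ∧ (∃ j, hGH.eigenvalues j < 0)) ∧
    ((∀ i j, hH.eigenvalues i ≠ 0 → hH.eigenvalues j ≠ 0 →
          hH.eigenvalues i = hH.eigenvalues j) → G = 0) :=
  G_sign_indefinite_general K hK X hX hinv M₁ G hM₁ hGdef hH hGH
end

section
/- The largest eigenvalue of M₁ = K_η⁻¹P_η is at most (λ₁ + η)⁻¹ and the smallest nonzero eigenvalue of M₁ is at least (λ_n + η)⁻¹, where λ₁ and λ_n are the smallest and largest eigenvalues of K. -/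
/-!
The identity `A⁻¹ A A⁻¹ = A⁻¹`, true for every square matrix (with `A⁻¹ = 0` when `A` is
singular), makes `M₁ K_η M₁ = M₁`. Hence if `M₁ v = μ v` with `v ≠ 0` and
`μ ≠ 0`, then `μ² vᵀK_ηv = vᵀM₁K_ηM₁v = μ vᵀv`, i.e. `μ⁻¹` is the Rayleigh quotient of `K_η` at
`v`, which lies between `λ₁ + η` and `λ_n + η`.
-/

open Matrix
open scoped MatrixOrder

namespace Matrix

section Order

variable {n : Type*} [Fintype n] [DecidableEq n]

lemma IsHermitian.algebraMap_le_iff_le_eigenvalues {A : Matrix n n ℝ} (hA : A.IsHermitian)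
    {a : ℝ} : algebraMap ℝ (Matrix n n ℝ) a ≤ A ↔ ∀ i, a ≤ hA.eigenvalues i := by
  rw [algebraMap_le_iff_le_spectrum hA.isSelfAdjoint, hA.spectrum_real_eq_range_eigenvalues,
    Set.forall_mem_range]

lemma IsHermitian.le_algebraMap_iff_eigenvalues_le {A : Matrix n n ℝ} (hA : A.IsHermitian)
    {b : ℝ} : A ≤ algebraMap ℝ (Matrix n n ℝ) b ↔ ∀ i, hA.eigenvalues i ≤ b := by
  rw [le_algebraMap_iff_spectrum_le hA.isSelfAdjoint, hA.spectrum_real_eq_range_eigenvalues,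
    Set.forall_mem_range]

lemma dotProduct_algebraMap_mulVec {R : Type*} [CommSemiring R] (a : R) (v : n → R) :
    v ⬝ᵥ algebraMap R (Matrix n n R) a *ᵥ v = a * (v ⬝ᵥ v) := by
  rw [Algebra.algebraMap_eq_smul_one, smul_mulVec, one_mulVec, dotProduct_smul, smul_eq_mul]

lemma mul_dotProduct_self_le_of_algebraMap_le {A : Matrix n n ℝ} {a : ℝ}
    (h : algebraMap ℝ (Matrix n n ℝ) a ≤ A) (v : n → ℝ) : a * (v ⬝ᵥ v) ≤ v ⬝ᵥ A *ᵥ v := by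
  have := (le_iff.mp h).dotProduct_mulVec_nonneg v
  rw [star_trivial, sub_mulVec, dotProduct_sub, dotProduct_algebraMap_mulVec] at this
  linarith

lemma dotProduct_mulVec_le_of_le_algebraMap {A : Matrix n n ℝ} {b : ℝ}
    (h : A ≤ algebraMap ℝ (Matrix n n ℝ) b) (v : n → ℝ) : v ⬝ᵥ A *ᵥ v ≤ b * (v ⬝ᵥ v) := by
  have := (le_iff.mp h).dotProduct_mulVec_nonneg v
  rw [star_trivial, sub_mulVec, dotProduct_sub, dotProduct_algebraMap_mulVec] at this
  linarith

end Order

lemma nonsing_inv_mul_mul_nonsing_inv {n R : Type*} [Fintype n] [DecidableEq n] [CommRing R]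
    (A : Matrix n n R) : A⁻¹ * A * A⁻¹ = A⁻¹ := by
  by_cases h : IsUnit A.det
  · rw [nonsing_inv_mul A h, Matrix.one_mul]
  · rw [nonsing_inv_apply_not_isUnit A h, Matrix.zero_mul, Matrix.zero_mul]

lemma sub_mul_mul_sub_eq_self_of_mul_mul_eq_self {n m R : Type*} [Fintype n] [Fintype m]
    [Ring R] {G B : Matrix n n R} {X : Matrix n m R} {Y : Matrix m n R} {S : Matrix m m R}
    (hG : G * B * G = G) (hS : S * (Y * G * X) * S = S) :
    (G - G * X * S * Y * G) * B * (G - G * X * S * Y * G) = G - G * X * S * Y * G := by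
  have hleft : G * B * (G * X * S * Y * G) = G * X * S * Y * G := calc
    _ = (G * B * G) * X * S * Y * G := by simp only [Matrix.mul_assoc]
    _ = _ := by rw [hG]
  have hright : G * X * S * Y * G * B * G = G * X * S * Y * G := calc
    _ = G * X * S * Y * (G * B * G) := by simp only [Matrix.mul_assoc]
    _ = _ := by rw [hG]
  have hboth : G * X * S * Y * G * B * (G * X * S * Y * G) = G * X * S * Y * G := calc
    _ = G * X * S * Y * (G * B * G) * X * S * Y * G := by simp only [Matrix.mul_assoc]
    _ = G * X * (S * (Y * G * X) * S) * Y * G := by rw [hG]; simp only [Matrix.mul_assoc]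
    _ = _ := by rw [hS]
  simp only [Matrix.sub_mul, Matrix.mul_sub, hG, hleft, hright, hboth]
  abel

lemma IsSymm.dotProduct_mulVec_eq_inv_mul_of_mul_mul_eq_self {n K : Type*} [Fintype n] [Field K]
    {M B : Matrix n n K} (hM : M.IsSymm) (hMBM : M * B * M = M) {μ : K} (hμ : μ ≠ 0)
    {v : n → K} (hv : M *ᵥ v = μ • v) : v ⬝ᵥ B *ᵥ v = μ⁻¹ * (v ⬝ᵥ v) := by
  have h : μ * (v ⬝ᵥ v) = μ ^ 2 * (v ⬝ᵥ B *ᵥ v) := calc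
    μ * (v ⬝ᵥ v) = v ⬝ᵥ (M * B * M) *ᵥ v := by rw [hMBM, hv, dotProduct_smul, smul_eq_mul]
    _ = (M *ᵥ v) ⬝ᵥ B *ᵥ (M *ᵥ v) := by
      rw [← mulVec_mulVec, ← mulVec_mulVec, dotProduct_mulVec, ← mulVec_transpose, hM.eq]
    _ = μ ^ 2 * (v ⬝ᵥ B *ᵥ v) := by
      rw [hv, mulVec_smul, smul_dotProduct, dotProduct_smul, smul_eq_mul, smul_eq_mul]; ring
  rw [eq_inv_mul_iff_mul_eq₀ hμ]
  apply mul_left_cancel₀ hμ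
  rw [h]
  ring

lemma IsSymm.inv_le_eigenvalue_le_inv_of_mul_mul_eq_self {n : Type*} [Fintype n] [DecidableEq n]
    {M B : Matrix n n ℝ} (hM : M.IsSymm) (hMBM : M * B * M = M) {a b : ℝ} (ha : 0 < a)
    (haB : algebraMap ℝ (Matrix n n ℝ) a ≤ B) (hBb : B ≤ algebraMap ℝ (Matrix n n ℝ) b)
    {μ : ℝ} (hμ : μ ≠ 0) {v : n → ℝ} (hv0 : v ≠ 0) (hv : M *ᵥ v = μ • v) :
    b⁻¹ ≤ μ ∧ μ ≤ a⁻¹ := by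
  have hq := hM.dotProduct_mulVec_eq_inv_mul_of_mul_mul_eq_self hMBM hμ hv
  have hvv : 0 < v ⬝ᵥ v := by simpa using dotProduct_star_self_pos_iff.mpr hv0
  have ha_le : a ≤ μ⁻¹ :=
    le_of_mul_le_mul_right (hq ▸ mul_dotProduct_self_le_of_algebraMap_le haB v) hvv
  have hle_b : μ⁻¹ ≤ b :=
    le_of_mul_le_mul_right (hq ▸ dotProduct_mulVec_le_of_le_algebraMap hBb v) hvv
  rw [← inv_inv μ]
  exact ⟨inv_anti₀ (ha.trans_le ha_le) hle_b, inv_anti₀ ha ha_le⟩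

end Matrix

theorem M1_eigenvalue_bounds_general {n m : ℕ}
    (K : Matrix (Fin n) (Fin n) ℝ) (hKpd : K.PosDef)
    (η : ℝ) (hη : 0 ≤ η)
    (X : Matrix (Fin n) (Fin m) ℝ)
    (M₁ : Matrix (Fin n) (Fin n) ℝ)
    (hM₁ : M₁ = (K + η • 1)⁻¹
      - (K + η • 1)⁻¹ * X * (Xᵀ * (K + η • 1)⁻¹ * X)⁻¹ * Xᵀ * (K + η • 1)⁻¹)
    (hH : M₁.IsHermitian)
    (lam1 lamn : ℝ)
    (hlam1 : (∀ i, lam1 ≤ hKpd.1.eigenvalues i) ∧ ∃ i, hKpd.1.eigenvalues i = lam1)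
    (hlamn : (∀ i, hKpd.1.eigenvalues i ≤ lamn) ∧ ∃ i, hKpd.1.eigenvalues i = lamn) :
    ∀ i, hH.eigenvalues i ≤ (lam1 + η)⁻¹ ∧
      (hH.eigenvalues i ≠ 0 → (lamn + η)⁻¹ ≤ hH.eigenvalues i) := by
  intro i
  have hpos : 0 < lam1 + η := by
    obtain ⟨j, hj⟩ := hlam1.2
    linarith [hKpd.eigenvalues_pos j]
  have hlow : algebraMap ℝ _ (lam1 + η) ≤ K + η • 1 := by
    rw [map_add, Algebra.algebraMap_eq_smul_one η]
    exact add_le_add_left (hKpd.1.algebraMap_le_iff_le_eigenvalues.mpr hlam1.1) _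
  have hup : K + η • 1 ≤ algebraMap ℝ _ (lamn + η) := by
    rw [map_add, Algebra.algebraMap_eq_smul_one η]
    exact add_le_add_left (hKpd.1.le_algebraMap_iff_eigenvalues_le.mpr hlamn.1) _
  have hMKM : M₁ * (K + η • 1) * M₁ = M₁ := hM₁ ▸
    sub_mul_mul_sub_eq_self_of_mul_mul_eq_self (nonsing_inv_mul_mul_nonsing_inv _)
      (nonsing_inv_mul_mul_nonsing_inv _)
  by_cases hμ : hH.eigenvalues i = 0
  · exact ⟨hμ ▸ inv_nonneg.mpr hpos.le, absurd hμ⟩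
  have hv0 : ⇑(hH.eigenvectorBasis i) ≠ 0 := fun h =>
    hH.eigenvectorBasis.orthonormal.ne_zero i (by ext j; exact congrFun h j)
  obtain ⟨hge, hle⟩ := (isHermitian_iff_isSymm.mp hH).inv_le_eigenvalue_le_inv_of_mul_mul_eq_self
    hMKM hpos hlow hup hμ hv0 (hH.mulVec_eigenvectorBasis i)
  exact ⟨hle, fun _ => hge⟩

theorem M1_eigenvalue_bounds {n m : ℕ} (hmn : m < n)
    (K : Matrix (Fin n) (Fin n) ℝ) (hKpd : K.PosDef)
    (η : ℝ) (hη : 0 ≤ η)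
    (X : Matrix (Fin n) (Fin m) ℝ) (hX : X.rank = m)
    (hinv : IsUnit (Xᵀ * (K + η • 1)⁻¹ * X).det)
    (M₁ : Matrix (Fin n) (Fin n) ℝ)
    (hM₁ : M₁ = (K + η • 1)⁻¹
      - (K + η • 1)⁻¹ * X * (Xᵀ * (K + η • 1)⁻¹ * X)⁻¹ * Xᵀ * (K + η • 1)⁻¹)
    (hH : M₁.IsHermitian)
    (lam1 lamn : ℝ)
    (hlam1 : (∀ i, lam1 ≤ hKpd.1.eigenvalues i) ∧ ∃ i, hKpd.1.eigenvalues i = lam1)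
    (hlamn : (∀ i, hKpd.1.eigenvalues i ≤ lamn) ∧ ∃ i, hKpd.1.eigenvalues i = lamn) :
    ∀ i, hH.eigenvalues i ≤ (lam1 + η)⁻¹ ∧
      (hH.eigenvalues i ≠ 0 → (lamn + η)⁻¹ ≤ hH.eigenvalues i) :=
  M1_eigenvalue_bounds_general K hKpd η hη X M₁ hM₁ hH lam1 lamn hlam1 hlamn
end

section
/- Bound on the derivative of the profile log marginal likelihood: for z ∉ range(X), the quantity |trace(M₁)/(n-m) - (zᵀM₁²z)/(zᵀM₁z)| is at most (λ₁+η)⁻¹ - (λ_n+η)⁻¹, where λ₁ ≤ λ_n are the smallest and largest eigenvalues of K. -/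
/-!
Write `A = K + ηI` and `M₁ = A⁻¹ - A⁻¹X(XᵀA⁻¹X)⁻¹XᵀA⁻¹`. Then `M₁ A M₁ = M₁`, so `M₁ ⪰ 0`,
and `tr(M₁ A) = n - m`. Since `(λ₁ + η)I ⪯ A ⪯ (λₙ + η)I`, the number `tr(M₁ A)` lies between
`(λ₁ + η) tr M₁` and `(λₙ + η) tr M₁`; and for `v = M₁ z`, which is nonzero as `z ∉ range X`,
`zᵀM₁²z / zᵀM₁z = vᵀv / vᵀAv`. So both quotients in the statement lie in
`[(λₙ + η)⁻¹, (λ₁ + η)⁻¹]`, and their distance is at most the length of that interval.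
-/

open Matrix

theorem div_mem_Icc_inv_of_mul_le_of_le_mul {𝕜 : Type*} [Field 𝕜] [LinearOrder 𝕜]
    [IsStrictOrderedRing 𝕜] {a b x y : 𝕜} (ha : 0 < a) (hb : 0 < b) (hy : 0 < y)
    (hax : a * x ≤ y) (hbx : y ≤ b * x) : x / y ∈ Set.Icc b⁻¹ a⁻¹ := by
  rw [Set.mem_Icc, le_div_iff₀ hy, div_le_iff₀ hy, inv_mul_le_iff₀ hb, le_inv_mul_iff₀ ha]
  exact ⟨hbx, hax⟩

namespace Matrix

variable {ι κ : Type*} [Fintype ι] [Fintype κ]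

theorem IsSymm.dotProduct_mulVec_comm {M : Matrix ι ι ℝ} (hM : M.IsSymm) (v w : ι → ℝ) :
    v ⬝ᵥ (M *ᵥ w) = (M *ᵥ v) ⬝ᵥ w := by
  rw [dotProduct_mulVec, ← vecMul_transpose, hM.eq]

theorem IsSymm.dotProduct_mulVec_eq_of_mul_mul_self {M A : Matrix ι ι ℝ} (hM : M.IsSymm)
    (h : M * A * M = M) (z : ι → ℝ) :
    z ⬝ᵥ (M *ᵥ z) = (M *ᵥ z) ⬝ᵥ (A *ᵥ (M *ᵥ z)) := by
  conv_lhs => rw [← h]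
  rw [← mulVec_mulVec, ← mulVec_mulVec, hM.dotProduct_mulVec_comm]

variable [DecidableEq ι] [DecidableEq κ]

theorem IsSymm.dotProduct_sq_mulVec {M : Matrix ι ι ℝ} (hM : M.IsSymm) (z : ι → ℝ) :
    z ⬝ᵥ ((M ^ 2) *ᵥ z) = (M *ᵥ z) ⬝ᵥ (M *ᵥ z) := by
  rw [sq, ← mulVec_mulVec, hM.dotProduct_mulVec_comm]

open scoped MatrixOrder in
theorem IsHermitian.posSemidef_sub_smul_one {A : Matrix ι ι ℝ} (hA : A.IsHermitian) {c : ℝ}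
    (h : ∀ i, c ≤ hA.eigenvalues i) : (A - c • 1).PosSemidef := by
  rw [← le_iff, ← Algebra.algebraMap_eq_smul_one,
    algebraMap_le_iff_le_spectrum hA.isSelfAdjoint, hA.spectrum_real_eq_range_eigenvalues]
  rintro _ ⟨i, rfl⟩
  exact h i

open scoped MatrixOrder in
theorem IsHermitian.posSemidef_smul_one_sub {A : Matrix ι ι ℝ} (hA : A.IsHermitian) {c : ℝ}
    (h : ∀ i, hA.eigenvalues i ≤ c) : (c • 1 - A).PosSemidef := by
  rw [← le_iff, ← Algebra.algebraMap_eq_smul_one,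
    le_algebraMap_iff_spectrum_le hA.isSelfAdjoint, hA.spectrum_real_eq_range_eigenvalues]
  rintro _ ⟨i, rfl⟩
  exact h i

open scoped MatrixOrder ComplexOrder in
theorem PosSemidef.trace_mul_nonneg {𝕜 : Type*} [RCLike 𝕜] {M D : Matrix ι ι 𝕜}
    (hM : M.PosSemidef) (hD : D.PosSemidef) : 0 ≤ (M * D).trace := by
  obtain ⟨hS, hSS⟩ : (CFC.sqrt M).PosSemidef ∧ CFC.sqrt M * CFC.sqrt M = M :=
    ⟨(CFC.sqrt_nonneg M).posSemidef, CFC.sqrt_mul_sqrt_self M hM.nonneg⟩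
  have := (hD.mul_mul_conjTranspose_same (CFC.sqrt M)).trace_nonneg
  rwa [hS.1, Matrix.mul_assoc, trace_mul_comm, Matrix.mul_assoc, hSS, trace_mul_comm] at this

theorem mul_trace_le_trace_mul_of_posSemidef_sub {M A : Matrix ι ι ℝ} (hM : M.PosSemidef)
    {c : ℝ} (h : (A - c • 1).PosSemidef) : c * M.trace ≤ (M * A).trace := by
  have := hM.trace_mul_nonneg h
  rw [Matrix.mul_sub, Matrix.mul_smul, Matrix.mul_one, trace_sub, trace_smul, smul_eq_mul] at this
  linarith

theorem trace_mul_le_mul_trace_of_posSemidef_sub {M A : Matrix ι ι ℝ} (hM : M.PosSemidef)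
    {c : ℝ} (h : (c • 1 - A).PosSemidef) : (M * A).trace ≤ c * M.trace := by
  have := hM.trace_mul_nonneg h
  rw [Matrix.mul_sub, Matrix.mul_smul, Matrix.mul_one, trace_sub, trace_smul, smul_eq_mul] at this
  linarith

theorem mul_dotProduct_self_le_of_posSemidef_sub {A : Matrix ι ι ℝ} {c : ℝ}
    (h : (A - c • 1).PosSemidef) (v : ι → ℝ) : c * (v ⬝ᵥ v) ≤ v ⬝ᵥ (A *ᵥ v) := by
  have := h.dotProduct_mulVec_nonneg v
  rw [star_trivial, sub_mulVec, dotProduct_sub, smul_mulVec, one_mulVec, dotProduct_smul,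
    smul_eq_mul] at this
  linarith

theorem dotProduct_mulVec_le_of_posSemidef_sub {A : Matrix ι ι ℝ} {c : ℝ}
    (h : (c • 1 - A).PosSemidef) (v : ι → ℝ) : v ⬝ᵥ (A *ᵥ v) ≤ c * (v ⬝ᵥ v) := by
  have := h.dotProduct_mulVec_nonneg v
  rw [star_trivial, sub_mulVec, dotProduct_sub, smul_mulVec, one_mulVec, dotProduct_smul,
    smul_eq_mul] at this
  linarith

/-- The matrix `P` of restricted maximum likelihood: `A * P` is the projection onto the
`A⁻¹`-orthogonal complement of `range X`. -/
noncomputable def remlMatrix (A : Matrix ι ι ℝ) (X : Matrix ι κ ℝ) : Matrix ι ι ℝ :=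
  A⁻¹ - A⁻¹ * X * (Xᵀ * A⁻¹ * X)⁻¹ * Xᵀ * A⁻¹

section remlMatrix

variable {A : Matrix ι ι ℝ} {X : Matrix ι κ ℝ}

theorem IsSymm.remlMatrix (hA : A.IsSymm) : (remlMatrix A X).IsSymm := by
  have hAinv : (A⁻¹)ᵀ = A⁻¹ := by rw [transpose_nonsing_inv, hA.eq]
  have hGinv : ((Xᵀ * A⁻¹ * X)⁻¹)ᵀ = (Xᵀ * A⁻¹ * X)⁻¹ := by
    rw [transpose_nonsing_inv, transpose_mul, transpose_mul, transpose_transpose, hAinv,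
      Matrix.mul_assoc]
  simp only [IsSymm, Matrix.remlMatrix, transpose_sub, transpose_mul, transpose_transpose, hAinv,
    hGinv]
  simp only [Matrix.mul_assoc]

theorem transpose_mul_remlMatrix (hG : IsUnit (Xᵀ * A⁻¹ * X).det) :
    Xᵀ * remlMatrix A X = 0 := by
  rw [remlMatrix, Matrix.mul_sub, sub_eq_zero]
  simp only [← Matrix.mul_assoc]
  rw [mul_nonsing_inv _ hG, Matrix.one_mul]

theorem remlMatrix_mul (hA : IsUnit A.det) :
    remlMatrix A X * A = 1 - A⁻¹ * X * (Xᵀ * A⁻¹ * X)⁻¹ * Xᵀ := by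
  rw [remlMatrix, Matrix.sub_mul, nonsing_inv_mul _ hA, Matrix.mul_assoc _ A⁻¹ A,
    nonsing_inv_mul _ hA, Matrix.mul_one]

theorem mul_remlMatrix (hA : IsUnit A.det) :
    A * remlMatrix A X = 1 - X * (Xᵀ * A⁻¹ * X)⁻¹ * Xᵀ * A⁻¹ := by
  rw [remlMatrix, Matrix.mul_sub, mul_nonsing_inv _ hA]
  simp only [← Matrix.mul_assoc]
  rw [mul_nonsing_inv _ hA, Matrix.one_mul]

theorem remlMatrix_mul_mul_self (hA : IsUnit A.det) (hG : IsUnit (Xᵀ * A⁻¹ * X).det) :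
    remlMatrix A X * A * remlMatrix A X = remlMatrix A X := by
  rw [remlMatrix_mul hA, Matrix.sub_mul, Matrix.one_mul, Matrix.mul_assoc _ Xᵀ,
    transpose_mul_remlMatrix hG, Matrix.mul_zero, sub_zero]

theorem trace_remlMatrix_mul (hA : IsUnit A.det) (hG : IsUnit (Xᵀ * A⁻¹ * X).det) :
    (remlMatrix A X * A).trace = Fintype.card ι - Fintype.card κ := by
  rw [remlMatrix_mul hA, trace_sub, trace_one, Matrix.mul_assoc, trace_mul_comm,
    Matrix.mul_assoc, ← Matrix.mul_assoc Xᵀ, nonsing_inv_mul _ hG, trace_one]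

theorem PosDef.posSemidef_remlMatrix (hA : A.PosDef) (hG : IsUnit (Xᵀ * A⁻¹ * X).det) :
    (remlMatrix A X).PosSemidef := by
  have := hA.posSemidef.conjTranspose_mul_mul_same (remlMatrix A X)
  rwa [conjTranspose_eq_transpose_of_trivial, (isHermitian_iff_isSymm.mp hA.1).remlMatrix.eq,
    remlMatrix_mul_mul_self hA.det_pos.ne'.isUnit hG] at this

theorem exists_mulVec_eq_of_remlMatrix_mulVec_eq_zero (hA : IsUnit A.det) {z : ι → ℝ}
    (hz : remlMatrix A X *ᵥ z = 0) : ∃ w, X *ᵥ w = z := by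
  refine ⟨((Xᵀ * A⁻¹ * X)⁻¹ * Xᵀ * A⁻¹) *ᵥ z, ?_⟩
  have := congrArg (A *ᵥ ·) hz
  simp only [mulVec_mulVec, mul_remlMatrix hA, mulVec_zero, sub_mulVec, one_mulVec,
    sub_eq_zero] at this
  simpa [Matrix.mul_assoc] using this.symm

end remlMatrix

end Matrix

theorem deriv_profile_likelihood_bound_general {n m : ℕ} (hmn : m < n)
    (K : Matrix (Fin n) (Fin n) ℝ) (hKpd : K.PosDef)
    (η : ℝ) (hη : 0 ≤ η)
    (X : Matrix (Fin n) (Fin m) ℝ)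
    (hinv : IsUnit (Xᵀ * (K + η • 1)⁻¹ * X).det)
    (z : Fin n → ℝ) (hz : ¬ ∃ w : Fin m → ℝ, X *ᵥ w = z)
    (M₁ : Matrix (Fin n) (Fin n) ℝ)
    (hM₁ : M₁ = (K + η • 1)⁻¹
      - (K + η • 1)⁻¹ * X * (Xᵀ * (K + η • 1)⁻¹ * X)⁻¹ * Xᵀ * (K + η • 1)⁻¹)
    (lam1 lamn : ℝ)
    (hlam1 : (∀ i, lam1 ≤ hKpd.1.eigenvalues i) ∧ ∃ i, hKpd.1.eigenvalues i = lam1)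
    (hlamn : (∀ i, hKpd.1.eigenvalues i ≤ lamn) ∧ ∃ i, hKpd.1.eigenvalues i = lamn) :
    |M₁.trace / ((n : ℝ) - m) - (z ⬝ᵥ ((M₁ ^ 2) *ᵥ z)) / (z ⬝ᵥ (M₁ *ᵥ z))|
      ≤ (lam1 + η)⁻¹ - (lamn + η)⁻¹ := by
  set A := K + η • (1 : Matrix (Fin n) (Fin n) ℝ)
  obtain ⟨i₁, hi₁⟩ := hlam1.2
  have hα : 0 < lam1 + η := by linarith [hKpd.eigenvalues_pos i₁]
  have hβ : 0 < lamn + η := by linarith [hKpd.eigenvalues_pos i₁, hlamn.1 i₁]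
  have hA : A.PosDef := hKpd.add_posSemidef (PosSemidef.one.smul hη)
  have hA_unit : IsUnit A.det := hA.det_pos.ne'.isUnit
  have hA_lower : (A - (lam1 + η) • 1).PosSemidef := by
    convert hKpd.1.posSemidef_sub_smul_one hlam1.1 using 1
    module
  have hA_upper : ((lamn + η) • 1 - A).PosSemidef := by
    convert hKpd.1.posSemidef_smul_one_sub hlamn.1 using 1
    module
  replace hM₁ : M₁ = remlMatrix A X := hM₁
  have hM_psd : M₁.PosSemidef := hM₁ ▸ hA.posSemidef_remlMatrix hinv
  have hM_symm : M₁.IsSymm := isHermitian_iff_isSymm.mp hM_psd.1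
  have hM_proj : M₁ * A * M₁ = M₁ := hM₁ ▸ remlMatrix_mul_mul_self hA_unit hinv
  have htrace : (M₁ * A).trace = (n : ℝ) - m := by
    simpa [hM₁] using trace_remlMatrix_mul hA_unit hinv
  have htrace_mem := div_mem_Icc_inv_of_mul_le_of_le_mul hα hβ
    (sub_pos.mpr (Nat.cast_lt.mpr hmn))
    (htrace ▸ mul_trace_le_trace_mul_of_posSemidef_sub hM_psd hA_lower)
    (htrace ▸ trace_mul_le_mul_trace_of_posSemidef_sub hM_psd hA_upper)
  have hv : M₁ *ᵥ z ≠ 0 := fun h ↦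
    hz (exists_mulVec_eq_of_remlMatrix_mulVec_eq_zero hA_unit (hM₁ ▸ h))
  have hquot_mem := div_mem_Icc_inv_of_mul_le_of_le_mul hα hβ
    (by simpa using hA.dotProduct_mulVec_pos hv)
    (mul_dotProduct_self_le_of_posSemidef_sub hA_lower (M₁ *ᵥ z))
    (dotProduct_mulVec_le_of_posSemidef_sub hA_upper (M₁ *ᵥ z))
  rw [hM_symm.dotProduct_sq_mulVec,
    hM_symm.dotProduct_mulVec_eq_of_mul_mul_self hM_proj,
    ← Real.dist_eq]
  exact Real.dist_le_of_mem_Icc htrace_mem hquot_mem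

theorem deriv_profile_likelihood_bound {n m : ℕ} (hmn : m < n)
    (K : Matrix (Fin n) (Fin n) ℝ) (hKpd : K.PosDef)
    (η : ℝ) (hη : 0 ≤ η)
    (X : Matrix (Fin n) (Fin m) ℝ) (hX : X.rank = m)
    (hinv : IsUnit (Xᵀ * (K + η • 1)⁻¹ * X).det)
    (z : Fin n → ℝ) (hz : ¬ ∃ w : Fin m → ℝ, X *ᵥ w = z)
    (M₁ : Matrix (Fin n) (Fin n) ℝ)
    (hM₁ : M₁ = (K + η • 1)⁻¹
      - (K + η • 1)⁻¹ * X * (Xᵀ * (K + η • 1)⁻¹ * X)⁻¹ * Xᵀ * (K + η • 1)⁻¹)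
    (lam1 lamn : ℝ)
    (hlam1 : (∀ i, lam1 ≤ hKpd.1.eigenvalues i) ∧ ∃ i, hKpd.1.eigenvalues i = lam1)
    (hlamn : (∀ i, hKpd.1.eigenvalues i ≤ lamn) ∧ ∃ i, hKpd.1.eigenvalues i = lamn) :
    |M₁.trace / ((n : ℝ) - m) - (z ⬝ᵥ ((M₁ ^ 2) *ᵥ z)) / (z ⬝ᵥ (M₁ *ᵥ z))|
      ≤ (lam1 + η)⁻¹ - (lamn + η)⁻¹ :=
  deriv_profile_likelihood_bound_general hmn K hKpd η hη X hinv z hz M₁ hM₁ lam1 lamn hlam1 hlamn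
end

section
/- First-order Neumann asymptote of M₁: with Q := I - X(XᵀX)⁻¹Xᵀ and N := KQ, the difference η·M₁ - Q·(I - η⁻¹N + η⁻²N²) has operator norm O(η⁻³·λ_n³) as η → ∞, where λ_n = ‖K‖; more precisely, for η > λ_n, ‖η·M₁(η) - Q(I - η⁻¹N + η⁻²N²)‖ ≤ C·λ_n³/η³ for a constant C depending only on n, m, and the conditioning of X. -/
/-!
For `A` invertible write `P(A) := A⁻¹ - A⁻¹X(XᵀA⁻¹X)⁻¹XᵀA⁻¹`, so that `Q = P(1)` and
`M₁(η) = P(K + η)`. Since `Xᵀ P(B) = 0`, one has `P(A) A P(B) = P(B)`; with `A = K + η` and `B = 1`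
this is the exact resolvent identity `η M₁ + M₁ N = Q`. Multiplying it by the truncated Neumann
series gives the remainder `η M₁ - Q (1 - N/η + N²/η²) = -M₁ N³ / η²` exactly. Finally `Q` is an
orthogonal projection, so `‖N‖ ≤ ‖K‖`, and the symmetric matrix `M₁ = M₁ (K + η) M₁` satisfies
`M₁/η - M₁² = M₁ K M₁ / η ≥ 0`, so `‖M₁‖ ≤ 1/η`; hence `C = 1` works.
-/

open Matrix
open scoped Matrix.Norms.L2Operator InnerProductSpace ComplexOrder

theorem neumann_remainder {𝕜 R : Type*} [Field 𝕜] [Ring R] [Algebra 𝕜 R] {M N Q : R} {η : 𝕜}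
    (hη : η ≠ 0) (h : η • M + M * N = Q) :
    η • M - Q * (1 - η⁻¹ • N + η⁻¹ ^ 2 • N ^ 2) = -(η⁻¹ ^ 2 • (M * N ^ 3)) := by
  subst h
  simp only [pow_succ, pow_zero, one_mul, add_mul, mul_add, mul_sub, mul_one,
    mul_smul_comm, smul_mul_assoc, smul_smul, mul_assoc, smul_add]
  match_scalars <;> field_simp <;> ring

namespace ContinuousLinearMap

variable {𝕜 E : Type*} [RCLike 𝕜] [NormedAddCommGroup E] [InnerProductSpace 𝕜 E]

theorem norm_le_of_isPositive_smul_sub_mul_self {T : E →L[𝕜] E}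
    (hT : (T : E →ₗ[𝕜] E).IsSymmetric) {c : ℝ} (hc : 0 ≤ c)
    (h : ((c : 𝕜) • T - T * T).IsPositive) : ‖T‖ ≤ c := by
  refine opNorm_le_bound T hc fun x => ?_
  have hsq : ‖T x‖ * ‖T x‖ ≤ ‖T x‖ * (c * ‖x‖) := calc
    ‖T x‖ * ‖T x‖ = RCLike.re ⟪T (T x), x⟫_𝕜 := by
      rw [← inner_self_eq_norm_mul_norm (𝕜 := 𝕜)]; exact congrArg RCLike.re (hT (T x) x).symm
    _ ≤ c * RCLike.re ⟪T x, x⟫_𝕜 := by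
      simpa [inner_sub_left, inner_smul_left] using h.re_inner_nonneg_left x
    _ ≤ ‖T x‖ * (c * ‖x‖) := by
      rw [mul_left_comm]; exact mul_le_mul_of_nonneg_left (re_inner_le_norm _ _) hc
  rcases (norm_nonneg (T x)).eq_or_lt with h0 | hpos
  · rw [← h0]; positivity
  · exact le_of_mul_le_mul_left hsq hpos

end ContinuousLinearMap

namespace Matrix

theorem l2_opNorm_le_of_posSemidef_smul_sub_mul_self {𝕜 ι : Type*} [RCLike 𝕜] [Fintype ι]
    [DecidableEq ι] {H : Matrix ι ι 𝕜}
    (hH : H.IsHermitian) {c : ℝ} (hc : 0 ≤ c) (h : ((c : 𝕜) • H - H * H).PosSemidef) :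
    ‖H‖ ≤ c := by
  rw [← l2_opNorm_toEuclideanCLM]
  refine ContinuousLinearMap.norm_le_of_isPositive_smul_sub_mul_self ?_ hc ?_
  · exact isSymmetric_toEuclideanLin_iff.mpr hH
  · rw [← map_smul, ← map_mul, ← map_sub, ← ContinuousLinearMap.isPositive_toLinearMap_iff]
    exact isPositive_toEuclideanLin_iff.mpr h

theorem mulVec_injective_of_rank_eq_card {𝕜 ι κ : Type*} [Field 𝕜] [Fintype κ] {X : Matrix ι κ 𝕜}
    (hX : X.rank = Fintype.card κ) : Function.Injective X.mulVec := by
  have := LinearMap.finrank_range_add_finrank_ker X.mulVecLin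
  rw [← rank, hX, Module.finrank_fintype_fun_eq_card, add_eq_left,
    Submodule.finrank_eq_zero] at this
  exact LinearMap.ker_eq_bot.mp this

section Field

variable {𝕜 ι κ : Type*} [Field 𝕜] [Fintype ι] [DecidableEq ι] [Fintype κ] [DecidableEq κ]

/-- `projectedInv (K + η • 1) X` is `M₁(η)` and `projectedInv 1 X` is `Q`. -/
noncomputable def projectedInv (A : Matrix ι ι 𝕜) (X : Matrix ι κ 𝕜) : Matrix ι ι 𝕜 :=
  A⁻¹ - A⁻¹ * X * (Xᵀ * A⁻¹ * X)⁻¹ * Xᵀ * A⁻¹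

variable {A B : Matrix ι ι 𝕜} {X : Matrix ι κ 𝕜}

theorem projectedInv_one (X : Matrix ι κ 𝕜) :
    projectedInv 1 X = 1 - X * (Xᵀ * X)⁻¹ * Xᵀ := by
  simp [projectedInv]

theorem transpose_mul_projectedInv (hS : IsUnit (Xᵀ * A⁻¹ * X)) :
    Xᵀ * projectedInv A X = 0 := by
  rw [projectedInv, Matrix.mul_sub, sub_eq_zero]
  calc Xᵀ * A⁻¹ = (Xᵀ * A⁻¹ * X * (Xᵀ * A⁻¹ * X)⁻¹) * (Xᵀ * A⁻¹) := by
        rw [mul_nonsing_inv _ ((isUnit_iff_isUnit_det _).mp hS), Matrix.one_mul]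
    _ = _ := by simp only [Matrix.mul_assoc]

theorem transpose_projectedInv (hA : Aᵀ = A) : (projectedInv A X)ᵀ = projectedInv A X := by
  simp [projectedInv, transpose_nonsing_inv, hA, Matrix.mul_assoc]

theorem projectedInv_mul (hA : Aᵀ = A) (hS : IsUnit (Xᵀ * A⁻¹ * X)) :
    projectedInv A X * X = 0 := by
  simpa [transpose_mul, transpose_projectedInv hA] using
    congrArg transpose (transpose_mul_projectedInv hS)

theorem projectedInv_mul_mul_projectedInv (hA : IsUnit A) (hS : IsUnit (Xᵀ * B⁻¹ * X)) :
    projectedInv A X * A * projectedInv B X = projectedInv B X := by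
  have hAA : A⁻¹ * A = 1 := nonsing_inv_mul _ ((isUnit_iff_isUnit_det _).mp hA)
  calc projectedInv A X * A * projectedInv B X
      = A⁻¹ * A * projectedInv B X
          - A⁻¹ * X * (Xᵀ * A⁻¹ * X)⁻¹ * (Xᵀ * A⁻¹ * A) * projectedInv B X := by
        simp only [projectedInv, Matrix.sub_mul, Matrix.mul_assoc]
    _ = projectedInv B X := by
        rw [Matrix.mul_assoc Xᵀ A⁻¹ A, hAA, Matrix.mul_one, Matrix.mul_assoc _ Xᵀ,
          transpose_mul_projectedInv hS, Matrix.mul_zero, sub_zero, Matrix.one_mul]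

theorem projectedInv_mul_projectedInv_one (hA : Aᵀ = A) (hS : IsUnit (Xᵀ * A⁻¹ * X)) :
    projectedInv A X * projectedInv 1 X = projectedInv A X := by
  rw [projectedInv_one, Matrix.mul_sub, Matrix.mul_one, ← Matrix.mul_assoc, ← Matrix.mul_assoc,
    projectedInv_mul hA hS, Matrix.zero_mul, Matrix.zero_mul, sub_zero]

theorem smul_projectedInv_add_mul_projectedInv_one {K : Matrix ι ι 𝕜} {η : 𝕜} (hK : Kᵀ = K)
    (hA : IsUnit (K + η • 1)) (hS : IsUnit (Xᵀ * (K + η • 1)⁻¹ * X)) (hX : IsUnit (Xᵀ * X)) :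
    η • projectedInv (K + η • 1) X + projectedInv (K + η • 1) X * (K * projectedInv 1 X)
      = projectedInv 1 X := by
  have hsymm : (K + η • 1)ᵀ = K + η • 1 := by simp [hK]
  conv_rhs => rw [← projectedInv_mul_mul_projectedInv hA (by simpa using hX)]
  rw [Matrix.mul_add, Matrix.add_mul, Matrix.mul_smul, Matrix.mul_one, Matrix.smul_mul,
    projectedInv_mul_projectedInv_one hsymm hS, Matrix.mul_assoc, add_comm]

end Field

section Real

variable {ι κ : Type*} [Fintype ι] [DecidableEq ι] [Fintype κ] [DecidableEq κ]
  {A : Matrix ι ι ℝ} {X : Matrix ι κ ℝ}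

theorem isUnit_transpose_mul_inv_mul (hA : A.PosDef) (hX : Function.Injective X.mulVec) :
    IsUnit (Xᵀ * A⁻¹ * X) := by
  simpa using (hA.inv.conjTranspose_mul_mul_same hX).isUnit

theorem l2_opNorm_projectedInv_one_le (hX : IsUnit (Xᵀ * X)) : ‖projectedInv 1 X‖ ≤ 1 := by
  refine IsStarProjection.norm_le _ ⟨?_, ?_⟩
  · exact projectedInv_mul_projectedInv_one transpose_one (by simpa using hX)
  · exact (conjTranspose_eq_transpose_of_trivial _).trans (transpose_projectedInv transpose_one)

theorem l2_opNorm_projectedInv_add_smul_one_le {K : Matrix ι ι ℝ} (hK : K.PosSemidef) {η : ℝ}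
    (hη : 0 < η) (hX : Function.Injective X.mulVec) :
    ‖projectedInv (K + η • 1) X‖ ≤ η⁻¹ := by
  have hA : (K + η • 1).PosDef := PosDef.posSemidef_add hK (PosDef.one.smul hη)
  set P := projectedInv (K + η • 1) X
  have hPt : Pᵀ = P := transpose_projectedInv hA.isHermitian
  have hPAP : P * (K + η • 1) * P = P :=
    projectedInv_mul_mul_projectedInv hA.isUnit (isUnit_transpose_mul_inv_mul hA hX)
  have hsq : η⁻¹ • P - P * P = η⁻¹ • (Pᴴ * K * P) := by
    rw [conjTranspose_eq_transpose_of_trivial, hPt]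
    nth_rw 1 [← hPAP]
    rw [Matrix.mul_add, Matrix.add_mul, Matrix.mul_smul, Matrix.mul_one, Matrix.smul_mul, smul_add,
      smul_smul, inv_mul_cancel₀ hη.ne', one_smul, add_sub_cancel_right]
  refine l2_opNorm_le_of_posSemidef_smul_sub_mul_self hPt (inv_nonneg.mpr hη.le) ?_
  change (η⁻¹ • P - P * P).PosSemidef
  rw [hsq]
  exact (hK.conjTranspose_mul_mul_same P).smul (inv_nonneg.mpr hη.le)

end Real

end Matrix

theorem M1_neumann_asymptote {n m : ℕ}
    (K : Matrix (Fin n) (Fin n) ℝ) (hK : K.PosSemidef)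
    (X : Matrix (Fin n) (Fin m) ℝ) (hX : X.rank = m) :
    let Q : Matrix (Fin n) (Fin n) ℝ := 1 - X * (Xᵀ * X)⁻¹ * Xᵀ
    let N : Matrix (Fin n) (Fin n) ℝ := K * Q
    let M₁ : ℝ → Matrix (Fin n) (Fin n) ℝ := fun η =>
      (K + η • 1)⁻¹
        - (K + η • 1)⁻¹ * X * (Xᵀ * (K + η • 1)⁻¹ * X)⁻¹ * Xᵀ * (K + η • 1)⁻¹
    ∃ C : ℝ, 0 < C ∧ ∀ η : ℝ, ‖K‖ < η →
      ‖η • M₁ η - Q * (1 - η⁻¹ • N + (η⁻¹) ^ 2 • N ^ 2)‖ ≤ C * ‖K‖ ^ 3 / η ^ 3 := by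
  intro Q N M₁
  have hXinj : Function.Injective X.mulVec := mulVec_injective_of_rank_eq_card (by simpa using hX)
  have hXtX : IsUnit (Xᵀ * X) := by simpa using isUnit_transpose_mul_inv_mul PosDef.one hXinj
  have hQ : Q = projectedInv 1 X := (projectedInv_one X).symm
  have hN : ‖N‖ ≤ ‖K‖ := (norm_mul_le K Q).trans
    (mul_le_of_le_one_right (norm_nonneg K) (hQ ▸ l2_opNorm_projectedInv_one_le hXtX))
  refine ⟨1, one_pos, fun η hη => ?_⟩
  have hη0 : 0 < η := (norm_nonneg K).trans_lt hη
  have hA : (K + η • 1).PosDef := PosDef.posSemidef_add hK (PosDef.one.smul hη0)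
  have hM : ‖M₁ η‖ ≤ η⁻¹ := l2_opNorm_projectedInv_add_smul_one_le hK hη0 hXinj
  have hres : η • M₁ η + M₁ η * N = Q := by
    have hKt : Kᵀ = K := hK.isHermitian
    rw [show N = K * projectedInv 1 X from congrArg (K * ·) hQ, hQ]
    exact smul_projectedInv_add_mul_projectedInv_one hKt hA.isUnit
      (isUnit_transpose_mul_inv_mul hA hXinj) hXtX
  have hMN : ‖M₁ η * N ^ 3‖ ≤ η⁻¹ * ‖K‖ ^ 3 :=
    (norm_mul_le _ _).trans <| mul_le_mul hM ((norm_pow_le' N three_pos).trans (by gcongr))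
      (norm_nonneg _) (inv_nonneg.mpr hη0.le)
  rw [neumann_remainder hη0.ne' hres, norm_neg, norm_smul, norm_pow, norm_inv,
    Real.norm_of_nonneg hη0.le]
  calc η⁻¹ ^ 2 * ‖M₁ η * N ^ 3‖ ≤ η⁻¹ ^ 2 * (η⁻¹ * ‖K‖ ^ 3) := by gcongr
    _ = 1 * ‖K‖ ^ 3 / η ^ 3 := by field_simp
end
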